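/- arXiv:1403.0354 — 3 statements merged into one kernel-verified Lean document; each statement's English description precedes it below -/
import Mathlib

section
/- Let F(t) = 1 − ∫₀^∞ e^{−y − t/y} dy for t > 0. Then lim_{t→0⁺} F(t) / (t·ln(1/t)) = 1. -/
/-!
Write `1 - ∫₀^∞ e^{-y - t/y} dy = ∫₀^∞ e^{-y} (1 - e^{-t/y}) dy`. The integrand is at most `1`,
at most `t / y`, and at most `t e^{-y}` for `y ≥ 1`; splitting at `t` and `1` bounds the integral by
`t log (1/t) + 2t`, the logarithm coming from `∫ₜ¹ t / y dy`. Conversely, `1 - e^{-x} ≥ x e^{-x}` and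
`e^{-y} ≥ 1 - y` give `t (log (1/δ) - 1) e^{-t/δ}` from `[δ, 1]`. The choice `δ = t log (1/t)`
makes `t / δ → 0` while `log (1/δ) = log (1/t) - log log (1/t)`, so both bounds are
`t log (1/t) (1 + o(1))`.
-/

open Filter Topology Set MeasureTheory Real intervalIntegral

lemma one_sub_exp_neg_le (x : ℝ) : 1 - exp (-x) ≤ x := by
  linarith [one_sub_le_exp_neg x]

lemma mul_exp_neg_le_one_sub_exp_neg (x : ℝ) : x * exp (-x) ≤ 1 - exp (-x) := by
  have h := mul_le_mul_of_nonneg_right (add_one_le_exp x) (exp_pos (-x)).le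
  rw [← exp_add, add_neg_cancel, exp_zero] at h
  linarith

noncomputable def expDeficit (t y : ℝ) : ℝ := exp (-y) * (1 - exp (-(t / y)))

section Pointwise

variable {t y : ℝ}

lemma expDeficit_eq_sub (t y : ℝ) : expDeficit t y = exp (-y) - exp (-y - t / y) := by
  rw [expDeficit, sub_eq_add_neg (-y), exp_add]
  ring

lemma expDeficit_nonneg (ht : 0 ≤ t) (hy : 0 ≤ y) : 0 ≤ expDeficit t y :=
  mul_nonneg (exp_pos _).le (sub_nonneg.2 (exp_le_one_iff.2 (neg_nonpos.2 (div_nonneg ht hy))))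

lemma expDeficit_le_one (hy : 0 ≤ y) : expDeficit t y ≤ 1 :=
  calc expDeficit t y ≤ exp (-y) * 1 :=
        mul_le_mul_of_nonneg_left (by linarith [exp_pos (-(t / y))]) (exp_pos _).le
    _ ≤ 1 := by simpa using hy

lemma expDeficit_le_mul_div (t y : ℝ) : expDeficit t y ≤ exp (-y) * (t / y) :=
  mul_le_mul_of_nonneg_left (one_sub_exp_neg_le _) (exp_pos _).le

lemma expDeficit_le_div (ht : 0 ≤ t) (hy : 0 ≤ y) : expDeficit t y ≤ t / y :=
  (expDeficit_le_mul_div t y).trans <|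
    mul_le_of_le_one_left (div_nonneg ht hy) (exp_le_one_iff.2 (neg_nonpos.2 hy))

lemma exp_neg_div_mul_le_expDeficit {δ : ℝ} (ht : 0 ≤ t) (hδ : 0 < δ) (hδy : δ ≤ y) :
    exp (-(t / δ)) * (t * y⁻¹ - t) ≤ expDeficit t y := by
  have hy : 0 < y := hδ.trans_le hδy
  have hx : 0 ≤ t / y := div_nonneg ht hy.le
  have hexp : exp (-(t / δ)) ≤ exp (-(t / y)) :=
    exp_le_exp.2 (neg_le_neg (div_le_div_of_nonneg_left ht hδ hδy))
  calc exp (-(t / δ)) * (t * y⁻¹ - t) = (1 - y) * (t / y * exp (-(t / δ))) := by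
        field_simp
    _ ≤ exp (-y) * (t / y * exp (-(t / y))) :=
        mul_le_mul (by linarith [one_sub_le_exp_neg y]) (mul_le_mul_of_nonneg_left hexp hx)
          (by positivity) (exp_pos _).le
    _ ≤ expDeficit t y :=
        mul_le_mul_of_nonneg_left (mul_exp_neg_le_one_sub_exp_neg _) (exp_pos _).le

end Pointwise

section Integral

variable {t : ℝ}

lemma integrableOn_exp_neg_sub_div (ht : 0 ≤ t) :
    IntegrableOn (fun y : ℝ => exp (-y - t / y)) (Ioi 0) := by
  refine (integrableOn_exp_neg_Ioi 0).mono' (by fun_prop) ?_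
  filter_upwards [ae_restrict_mem measurableSet_Ioi] with y hy
  rw [norm_of_nonneg (exp_pos _).le]
  exact exp_le_exp.2 (by linarith [div_nonneg ht (le_of_lt hy)])

lemma integrableOn_expDeficit (ht : 0 ≤ t) : IntegrableOn (expDeficit t) (Ioi 0) := by
  rw [show expDeficit t = _ from funext (expDeficit_eq_sub t)]
  exact (integrableOn_exp_neg_Ioi 0).sub (integrableOn_exp_neg_sub_div ht)

lemma one_sub_integral_exp_neg_sub_div (ht : 0 ≤ t) :
    1 - ∫ y in Ioi 0, exp (-y - t / y) = ∫ y in Ioi 0, expDeficit t y := by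
  simp only [expDeficit_eq_sub]
  rw [integral_sub (integrableOn_exp_neg_Ioi 0) (integrableOn_exp_neg_sub_div ht),
    integral_exp_neg_Ioi_zero]

lemma intervalIntegrable_expDeficit (ht : 0 ≤ t) {a b : ℝ} (ha : 0 ≤ a) (hab : a ≤ b) :
    IntervalIntegrable (expDeficit t) volume a b :=
  (intervalIntegrable_iff_integrableOn_Ioc_of_le hab).2 <|
    (integrableOn_expDeficit ht).mono_set (Ioc_subset_Ioi_self.trans (Ioi_subset_Ioi ha))

lemma integral_expDeficit_le (ht : 0 < t) (ht1 : t ≤ 1) :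
    ∫ y in Ioi 0, expDeficit t y ≤ t * log (1 / t) + 2 * t := by
  have hint := integrableOn_expDeficit ht.le
  have hsplit : ∫ y in Ioi 0, expDeficit t y =
      (∫ y in 0..t, expDeficit t y) + (∫ y in t..1, expDeficit t y) +
        ∫ y in Ioi 1, expDeficit t y := by
    rw [integral_add_adjacent_intervals (intervalIntegrable_expDeficit ht.le le_rfl ht.le)
      (intervalIntegrable_expDeficit ht.le ht.le ht1),
      integral_interval_add_Ioi hint (hint.mono_set (Ioi_subset_Ioi zero_le_one))]
  have h₀ : ∫ y in 0..t, expDeficit t y ≤ t := by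
    calc ∫ y in 0..t, expDeficit t y ≤ ∫ _ in 0..t, (1 : ℝ) :=
          integral_mono_on ht.le (intervalIntegrable_expDeficit ht.le le_rfl ht.le)
            intervalIntegrable_const fun y hy => expDeficit_le_one hy.1
      _ = t := by simp
  have h₁ : ∫ y in t..1, expDeficit t y ≤ t * log (1 / t) := by
    have hinv : IntervalIntegrable (fun y : ℝ => y⁻¹) volume t 1 :=
      intervalIntegrable_inv (fun y hy => ((uIcc_of_le ht1 ▸ hy).1.trans_lt' ht).ne')
        continuousOn_id
    calc ∫ y in t..1, expDeficit t y ≤ ∫ y in t..1, t * y⁻¹ :=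
          integral_mono_on ht1 (intervalIntegrable_expDeficit ht.le ht.le ht1)
            (hinv.const_mul t) fun y hy => expDeficit_le_div ht.le (ht.le.trans hy.1)
      _ = t * log (1 / t) := by
          rw [intervalIntegral.integral_const_mul, integral_inv_of_pos ht one_pos]
  have h₂ : ∫ y in Ioi 1, expDeficit t y ≤ t := by
    calc ∫ y in Ioi 1, expDeficit t y ≤ ∫ y in Ioi 1, t * exp (-y) :=
          setIntegral_mono_on (hint.mono_set (Ioi_subset_Ioi zero_le_one))
            ((integrableOn_exp_neg_Ioi 1).const_mul t) measurableSet_Ioi fun y hy => by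
              calc expDeficit t y ≤ exp (-y) * (t / y) := expDeficit_le_mul_div t y
                _ ≤ exp (-y) * t := mul_le_mul_of_nonneg_left
                    (div_le_self ht.le (le_of_lt hy)) (exp_pos _).le
                _ = t * exp (-y) := mul_comm _ _
      _ = t * exp (-1) := by rw [MeasureTheory.integral_const_mul, integral_exp_neg_Ioi]
      _ ≤ t := mul_le_of_le_one_right ht.le (by simp)
  linarith

lemma le_integral_expDeficit (ht : 0 ≤ t) {δ : ℝ} (hδ : 0 < δ) :
    exp (-(t / δ)) * t * (log (1 / δ) - 1) ≤ ∫ y in Ioi 0, expDeficit t y := by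
  have hint := integrableOn_expDeficit ht
  rcases le_or_gt δ 1 with hδ1 | hδ1
  swap
  · have : log (1 / δ) - 1 ≤ 0 := by
      rw [one_div, log_inv]; linarith [log_pos hδ1]
    exact (mul_nonpos_of_nonneg_of_nonpos (by positivity) this).trans
      (setIntegral_nonneg measurableSet_Ioi fun y hy => expDeficit_nonneg ht (le_of_lt hy))
  have hinv : IntervalIntegrable (fun y : ℝ => y⁻¹) volume δ 1 :=
    intervalIntegrable_inv (fun y hy => ((uIcc_of_le hδ1 ▸ hy).1.trans_lt' hδ).ne')
      continuousOn_id
  calc exp (-(t / δ)) * t * (log (1 / δ) - 1)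
      ≤ exp (-(t / δ)) * (t * log (1 / δ) - t * (1 - δ)) := by
        have : 0 ≤ exp (-(t / δ)) * t * δ := by positivity
        nlinarith
    _ = ∫ y in δ..1, exp (-(t / δ)) * (t * y⁻¹ - t) := by
        rw [intervalIntegral.integral_const_mul, integral_sub (hinv.const_mul t)
          intervalIntegrable_const, intervalIntegral.integral_const_mul,
          integral_inv_of_pos hδ one_pos, intervalIntegral.integral_const, smul_eq_mul, mul_comm (1 - δ)]
    _ ≤ ∫ y in δ..1, expDeficit t y :=
        integral_mono_on hδ1 ((hinv.const_mul t).sub intervalIntegrable_const |>.const_mul _)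
          (intervalIntegrable_expDeficit ht hδ.le hδ1) fun y hy =>
            exp_neg_div_mul_le_expDeficit ht hδ hy.1
    _ ≤ ∫ y in Ioi 0, expDeficit t y := by
        rw [integral_of_le hδ1]
        exact setIntegral_mono_set hint
          (ae_restrict_of_forall_mem measurableSet_Ioi fun y hy => expDeficit_nonneg ht (le_of_lt hy))
          (Ioc_subset_Ioi_self.trans (Ioi_subset_Ioi hδ.le)).eventuallyLE

end Integral

section Asymptotics

variable {t : ℝ}

lemma log_one_div_pos (ht0 : 0 < t) (ht1 : t < 1) : 0 < log (1 / t) :=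
  log_pos ((one_lt_div ht0).2 ht1)

lemma integral_expDeficit_div_le (ht0 : 0 < t) (ht1 : t < 1) :
    (∫ y in Ioi 0, expDeficit t y) / (t * log (1 / t)) ≤ 1 + 2 / log (1 / t) := by
  have hL := log_one_div_pos ht0 ht1
  rw [div_le_iff₀ (mul_pos ht0 hL)]
  calc ∫ y in Ioi 0, expDeficit t y ≤ t * log (1 / t) + 2 * t := integral_expDeficit_le ht0 ht1.le
    _ = (1 + 2 / log (1 / t)) * (t * log (1 / t)) := by field_simp

lemma le_integral_expDeficit_div (ht0 : 0 < t) (ht1 : t < 1) :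
    exp (-(log (1 / t))⁻¹) * (1 - (log (log (1 / t)) + 1) / log (1 / t)) ≤
      (∫ y in Ioi 0, expDeficit t y) / (t * log (1 / t)) := by
  set L := log (1 / t)
  have hL : 0 < L := log_one_div_pos ht0 ht1
  have hδ : t / (t * L) = L⁻¹ := by field_simp
  have hlogδ : log (1 / (t * L)) = L - log L := by
    have hLt : log t = -L := by simp only [L, one_div, log_inv, neg_neg]
    rw [one_div, log_inv, log_mul ht0.ne' hL.ne', hLt]
    ring
  rw [le_div_iff₀ (mul_pos ht0 hL)]
  calc exp (-L⁻¹) * (1 - (log L + 1) / L) * (t * L)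
      = exp (-(t / (t * L))) * t * (log (1 / (t * L)) - 1) := by
        rw [hδ, hlogδ]; field_simp; ring
    _ ≤ ∫ y in Ioi 0, expDeficit t y := le_integral_expDeficit ht0.le (mul_pos ht0 hL)

lemma tendsto_log_one_div_nhdsGT_zero : Tendsto (fun t : ℝ => log (1 / t)) (𝓝[>] 0) atTop := by
  simpa only [one_div, log_inv, tendsto_neg_atTop_iff] using tendsto_log_nhdsGT_zero

lemma tendsto_exp_neg_inv_mul_one_sub_log_add_one_div_atTop :
    Tendsto (fun L : ℝ => exp (-L⁻¹) * (1 - (log L + 1) / L)) atTop (𝓝 1) := by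
  have hinv : Tendsto (fun L : ℝ => L⁻¹) atTop (𝓝 0) := tendsto_inv_atTop_zero
  have hlog : Tendsto (fun L : ℝ => (log L + 1) / L) atTop (𝓝 0) := by
    simpa [add_div] using tendsto_pow_log_div_mul_add_atTop 1 0 1 one_ne_zero |>.add hinv
  have hexp : Tendsto (fun L : ℝ => exp (-L⁻¹)) atTop (𝓝 1) :=
    tendsto_exp_nhds_zero_nhds_one.comp (by simpa using hinv.neg)
  simpa using hexp.mul (tendsto_const_nhds.sub hlog)

lemma tendsto_one_add_two_div_atTop : Tendsto (fun L : ℝ => 1 + 2 / L) atTop (𝓝 1) := by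
  simpa using tendsto_const_nhds.add ((tendsto_const_nhds (x := (2 : ℝ))).div_atTop tendsto_id)

end Asymptotics

/-- Let `F(t) = 1 − ∫₀^∞ e^{−y − t/y} dy` for `t > 0`. Then
`lim_{t→0⁺} F(t) / (t ln(1/t)) = 1`. -/
theorem stmt5 :
    Tendsto
      (fun t : ℝ =>
        (1 - ∫ y in Set.Ioi (0 : ℝ), Real.exp (-y - t / y)) / (t * Real.log (1 / t)))
      (𝓝[>] 0) (𝓝 1) := by
  have hL := tendsto_log_one_div_nhdsGT_zero
  refine tendsto_of_tendsto_of_tendsto_of_le_of_le'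
    (tendsto_exp_neg_inv_mul_one_sub_log_add_one_div_atTop.comp hL)
    (tendsto_one_add_two_div_atTop.comp hL) ?_ ?_ <;>
  filter_upwards [Ioo_mem_nhdsGT one_pos] with t ⟨ht0, ht1⟩ <;>
  rw [one_sub_integral_exp_neg_sub_div ht0.le]
  exacts [le_integral_expDeficit_div ht0 ht1, integral_expDeficit_div_le ht0 ht1]
end

section
/- For every integer M ≥ 1, define Q₁(ε) = e^{−ε} · Σ_{i=0}^{M} C(M,i) · ((−1)^i/(2i−1)) · (1 − e^{−(2i−1)ε}). Then lim_{ε→0⁺} Q₁(ε) / ε^{M+1} = 2^M/(M+1). -/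
/-!
Write `Q₁(ε) = e^{-ε} S(ε)`. Termwise differentiation and the binomial theorem give
`S'(ε) = e^ε (1 - e^{-2ε})^M`, which behaves like `(2ε)^M` at `0`; since `S(0) = 0`,
L'Hôpital's rule yields `S(ε) / ε^{M+1} → 2^M / (M + 1)`, and `e^{-ε} → 1`.
-/

open Filter Topology Real Finset

lemma hasDerivAt_mul_one_sub_exp_neg_mul (a c x : ℝ) :
    HasDerivAt (fun ε => a * (1 - exp (-c * ε))) (a * c * exp (-c * x)) x := by
  refine ((((hasDerivAt_id x).const_mul (-c)).exp.const_sub 1).const_mul a).congr_deriv ?_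
  simp only [id, mul_one]
  ring

lemma tendsto_one_sub_exp_neg_mul_div (c : ℝ) :
    Tendsto (fun x => (1 - exp (-c * x)) / x) (𝓝[≠] 0) (𝓝 c) := by
  have h := hasDerivAt_iff_tendsto_slope_zero.mp
    (((hasDerivAt_id (0 : ℝ)).const_mul (-c)).exp.const_sub 1)
  simp only [id, mul_zero, exp_zero, sub_self, zero_add, sub_zero, smul_eq_mul] at h
  refine (h.congr fun x => ?_).trans (by simp)
  ring

lemma exp_mul_one_sub_exp_neg_two_mul_pow (M : ℕ) (x : ℝ) :
    exp x * (1 - exp (-2 * x)) ^ M =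
      ∑ i ∈ range (M + 1), (M.choose i : ℝ) * (-1) ^ i * exp (-(2 * (i : ℝ) - 1) * x) := by
  rw [sub_eq_neg_add, add_pow, mul_sum]
  refine sum_congr rfl fun i _ => ?_
  have : exp x * exp (-2 * x) ^ i = exp (-(2 * (i : ℝ) - 1) * x) := by
    rw [← exp_nat_mul, ← exp_add]; ring_nf
  rw [neg_pow, one_pow, ← this]; ring

lemma tendsto_div_pow_succ_of_hasDerivAt {F F' : ℝ → ℝ} {n : ℕ} {L : ℝ}
    (hF : ∀ x, HasDerivAt F (F' x) x) (hF0 : F 0 = 0)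
    (hlim : Tendsto (fun x => F' x / x ^ n) (𝓝[>] 0) (𝓝 L)) :
    Tendsto (fun x => F x / x ^ (n + 1)) (𝓝[>] 0) (𝓝 (L / (n + 1))) := by
  refine HasDerivAt.lhopital_zero_nhdsGT (f' := F') (g' := fun x => (n + 1 : ℝ) * x ^ n)
    (Eventually.of_forall hF) (Eventually.of_forall fun x => ?_) ?_ ?_ ?_ ?_
  · simpa using hasDerivAt_pow (n + 1) x
  · filter_upwards [self_mem_nhdsWithin] with x (hx : 0 < x)
    positivity
  · simpa [hF0] using ((hF 0).continuousAt.tendsto).mono_left nhdsWithin_le_nhds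
  · simpa using ((continuous_pow (n + 1)).tendsto' (0 : ℝ) 0 (by simp)).mono_left
      nhdsWithin_le_nhds
  · refine (hlim.div_const (n + 1)).congr fun x => ?_
    rw [div_div, mul_comm]

noncomputable def outageSum (M : ℕ) (ε : ℝ) : ℝ :=
  ∑ i ∈ range (M + 1), (M.choose i : ℝ) * ((-1) ^ i / (2 * (i : ℝ) - 1)) *
    (1 - exp (-(2 * (i : ℝ) - 1) * ε))

lemma outageSum_zero (M : ℕ) : outageSum M 0 = 0 := by
  simp [outageSum]

lemma hasDerivAt_outageSum (M : ℕ) (x : ℝ) :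
    HasDerivAt (outageSum M) (exp x * (1 - exp (-2 * x)) ^ M) x := by
  rw [exp_mul_one_sub_exp_neg_two_mul_pow]
  refine HasDerivAt.fun_sum fun i _ => ?_
  have hi : 2 * (i : ℝ) - 1 ≠ 0 := sub_ne_zero.mpr (mod_cast (by omega : 2 * i ≠ 1))
  refine (hasDerivAt_mul_one_sub_exp_neg_mul _ _ x).congr_deriv ?_
  field_simp

lemma tendsto_deriv_outageSum_div_pow (M : ℕ) :
    Tendsto (fun x => exp x * (1 - exp (-2 * x)) ^ M / x ^ M) (𝓝[>] 0) (𝓝 (2 ^ M)) := by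
  have hexp : Tendsto exp (𝓝[>] 0) (𝓝 1) := by
    simpa using (continuous_exp.tendsto 0).mono_left nhdsWithin_le_nhds
  have hslope := (tendsto_one_sub_exp_neg_mul_div 2).mono_left
    (nhdsWithin_mono 0 fun x (hx : 0 < x) => hx.ne')
  simpa [mul_div_assoc, div_pow] using hexp.mul (hslope.pow M)

theorem stmt7_general (M : ℕ) :
    Tendsto
      (fun ε : ℝ =>
        (Real.exp (-ε) *
            ∑ i ∈ Finset.range (M + 1),
              (M.choose i : ℝ) * ((-1) ^ i / (2 * (i : ℝ) - 1)) *
                (1 - Real.exp (-(2 * (i : ℝ) - 1) * ε))) / ε ^ (M + 1))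
      (𝓝[>] 0) (𝓝 (2 ^ M / (M + 1))) := by
  have hsum : Tendsto (fun ε => outageSum M ε / ε ^ (M + 1)) (𝓝[>] 0)
      (𝓝 (2 ^ M / (M + 1))) :=
    tendsto_div_pow_succ_of_hasDerivAt (hasDerivAt_outageSum M) (outageSum_zero M)
      (tendsto_deriv_outageSum_div_pow M)
  have hexp : Tendsto (fun ε : ℝ => exp (-ε)) (𝓝[>] 0) (𝓝 1) := by
    simpa [Function.comp_def] using
      ((continuous_exp.comp continuous_neg).tendsto 0).mono_left nhdsWithin_le_nhds
  rw [← one_mul (2 ^ M / _)]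
  exact (hexp.mul hsum).congr fun ε => (mul_div_assoc _ _ _).symm

/-- For every integer `M ≥ 1`, with
`Q₁(ε) = e^{−ε} Σ_{i=0}^{M} C(M,i) ((−1)^i/(2i−1)) (1 − e^{−(2i−1)ε})`,
we have `lim_{ε→0⁺} Q₁(ε)/ε^{M+1} = 2^M/(M+1)`. -/
theorem stmt7 (M : ℕ) (hM : 1 ≤ M) :
    Tendsto
      (fun ε : ℝ =>
        (Real.exp (-ε) *
            ∑ i ∈ Finset.range (M + 1),
              (M.choose i : ℝ) * ((-1) ^ i / (2 * (i : ℝ) - 1)) *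
                (1 - Real.exp (-(2 * (i : ℝ) - 1) * ε))) / ε ^ (M + 1))
      (𝓝[>] 0) (𝓝 (2 ^ M / (M + 1))) :=
  stmt7_general M
end

section
/- Fix an integer M ≥ 2. For ε > 0 set ε₀(ε) = (ε + √(ε² + 4ε))/2, and define Q₄(ε) = 2M · Σ_{i=0}^{M−1} C(M−1,i) · (−1)^i · [ (e^{−2(i+1)ε} − e^{−2(i+1)ε₀(ε)})/(2(i+1)) − e^{−(2i+1)ε} · ∫₀^{ε₀(ε)−ε} e^{−(2i+1)x − ε/x} dx ]. Then lim_{ε→0⁺} log Q₄(ε) / log ε = (M+1)/2. -/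
/-!
Summing the binomial expansion in `i` under the integral gives
`Q₄(ε) = 2M ∫₀^{ε₀-ε} G`, where
`G(x) = e^{-(x+ε)} (1 - e^{-2(x+ε)})^{M-1} (e^{-(x+ε)} - e^{-ε/x})`, and `ε₀ - ε` is the positive
root of `d (d + ε) = ε`, so `√ε/2 ≤ ε₀ - ε ≤ √ε`. Put `s = √ε`. For `x ≤ ε₀ - ε` we have
`x + ε ≤ ε/x`, so `G ≥ 0`. On `[s/4, s/2]` each of the `M - 1` middle factors is at least a
constant times `s`, and so is the last one. This gives `∫ G ≥ c s^{M+1}`. In the other direction,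
`1 - e^{-ε/x} ≤ 2ε/(x+ε)` removes one factor `x + ε`, so `G ≤ 2^M (x+ε)^{M-2} ε ≤ C s^M`, and
`∫ G ≤ C s^{M+1}`. Hence `log Q₄(ε) = ((M+1)/2) log ε + O(1)`.
-/

open Filter Topology MeasureTheory Set Real

noncomputable def epsZero (ε : ℝ) : ℝ := (ε + √(ε ^ 2 + 4 * ε)) / 2

noncomputable def q4 (M : ℕ) (ε : ℝ) : ℝ :=
  2 * M * ∑ i ∈ Finset.range M, ((M - 1).choose i : ℝ) * (-1) ^ i *
    ((exp (-2 * ((i : ℝ) + 1) * ε) - exp (-2 * ((i : ℝ) + 1) * epsZero ε)) / (2 * ((i : ℝ) + 1))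
      - exp (-(2 * (i : ℝ) + 1) * ε) *
          ∫ x in (0 : ℝ)..epsZero ε - ε, exp (-(2 * (i : ℝ) + 1) * x - ε / x))

noncomputable def outageIntegrand (n : ℕ) (ε x : ℝ) : ℝ :=
  exp (-(x + ε)) * (1 - exp (-2 * (x + ε))) ^ n * (exp (-(x + ε)) - exp (-(ε / x)))

section epsZero

variable {ε : ℝ}

lemma epsZero_sub_mul_epsZero (hε : 0 ≤ ε) : (epsZero ε - ε) * epsZero ε = ε := by
  have h : √(ε ^ 2 + 4 * ε) ^ 2 = ε ^ 2 + 4 * ε := sq_sqrt (by positivity)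
  unfold epsZero
  linear_combination h / 4

lemma epsZero_sub_pos (hε : 0 < ε) : 0 < epsZero ε - ε := by
  have : ε < √(ε ^ 2 + 4 * ε) := (lt_sqrt hε.le).2 (by nlinarith)
  unfold epsZero
  linarith

lemma epsZero_sub_le_sqrt (hε : 0 < ε) : epsZero ε - ε ≤ √ε := by
  have h := epsZero_sub_mul_epsZero hε.le
  have hd := epsZero_sub_pos hε
  exact (le_sqrt hd.le hε.le).2 (by nlinarith)

lemma sqrt_div_two_le_epsZero_sub (hε : 0 < ε) (hε1 : ε ≤ 1) : √ε / 2 ≤ epsZero ε - ε := by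
  have h := epsZero_sub_mul_epsZero hε.le
  have hs : √ε ^ 2 = ε := sq_sqrt hε.le
  have hs1 : √ε ≤ 1 := sqrt_le_one.2 hε1
  nlinarith [sqrt_pos.2 hε, epsZero_sub_pos hε]

end epsZero

lemma one_sub_pow_eq_sum (n : ℕ) (y : ℝ) :
    (1 - y) ^ n = ∑ i ∈ Finset.range (n + 1), (n.choose i : ℝ) * (-1) ^ i * y ^ i := by
  rw [sub_eq_neg_add, add_pow]
  refine Finset.sum_congr rfl fun i _ => ?_
  rw [neg_pow, one_pow, mul_one]
  ring

lemma exp_neg_mul_sub_le_exp_neg_sub_exp_neg (a b : ℝ) :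
    exp (-b) * (b - a) ≤ exp (-a) - exp (-b) := by
  have h : exp (-a) = exp (-b) * exp (b - a) := by rw [← exp_add]; ring_nf
  nlinarith [add_one_le_exp (b - a), exp_pos (-b)]

lemma one_sub_exp_neg_le_two_mul_div {u : ℝ} (hu : 0 ≤ u) : 1 - exp (-u) ≤ 2 * u / (1 + u) := by
  rw [le_div_iff₀ (by linarith)]
  nlinarith [one_sub_le_exp_neg u, exp_pos (-u)]

section outageIntegrand

variable {ε x : ℝ}

lemma outageIntegrand_nonneg (n : ℕ) (hε : 0 ≤ ε) (hx : 0 < x) (h : x * (x + ε) ≤ ε) :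
    0 ≤ outageIntegrand n ε x := by
  have hB : 0 ≤ 1 - exp (-2 * (x + ε)) := by
    have := exp_le_one_iff.2 (by nlinarith : -2 * (x + ε) ≤ 0); linarith
  have hC : exp (-(ε / x)) ≤ exp (-(x + ε)) :=
    exp_le_exp.2 (neg_le_neg ((le_div_iff₀ hx).2 (by linarith)))
  unfold outageIntegrand
  exact mul_nonneg (mul_nonneg (exp_pos _).le (pow_nonneg hB n)) (sub_nonneg.2 hC)

lemma abs_outageIntegrand_le_one (n : ℕ) (hε : 0 ≤ ε) (hx : 0 < x) :
    |outageIntegrand n ε x| ≤ 1 := by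
  have hA : exp (-(x + ε)) ≤ 1 := exp_le_one_iff.2 (by linarith)
  have hB : |1 - exp (-2 * (x + ε))| ≤ 1 := by
    have := exp_le_one_iff.2 (by linarith : -2 * (x + ε) ≤ 0)
    rw [abs_le]; constructor <;> nlinarith [exp_pos (-2 * (x + ε))]
  have hC : |exp (-(x + ε)) - exp (-(ε / x))| ≤ 1 := by
    rw [abs_le]; constructor <;> nlinarith [exp_pos (-(x + ε)), exp_pos (-(ε / x)),
      exp_le_one_iff.2 (neg_nonpos.2 (div_nonneg hε hx.le))]
  unfold outageIntegrand
  rw [abs_mul, abs_mul, abs_pow, abs_of_pos (exp_pos _)]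
  exact mul_le_one₀ (mul_le_one₀ hA (by positivity) (pow_le_one₀ (abs_nonneg _) hB))
    (abs_nonneg _) hC

lemma outageIntegrand_le (m : ℕ) (hε : 0 < ε) (hx : 0 < x) :
    outageIntegrand (m + 1) ε x ≤ 2 ^ (m + 2) * (x + ε) ^ m * ε := by
  have hA : exp (-(x + ε)) ≤ 1 := exp_le_one_iff.2 (by linarith)
  have hB0 : 0 ≤ 1 - exp (-2 * (x + ε)) := by
    have := exp_le_one_iff.2 (by linarith : -2 * (x + ε) ≤ 0); linarith
  have hB : 1 - exp (-2 * (x + ε)) ≤ 2 * (x + ε) := by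
    have := one_sub_le_exp_neg (2 * (x + ε)); rw [neg_mul]; linarith
  unfold outageIntegrand
  rcases le_or_gt (exp (-(x + ε)) - exp (-(ε / x))) 0 with hC | hC
  · exact (mul_nonpos_of_nonneg_of_nonpos (by positivity) hC).trans (by positivity)
  · have hC' : exp (-(x + ε)) - exp (-(ε / x)) ≤ 2 * ε / (x + ε) := by
      have := one_sub_exp_neg_le_two_mul_div (div_nonneg hε.le hx.le)
      rw [show 2 * (ε / x) / (1 + ε / x) = 2 * ε / (x + ε) by field_simp] at this
      linarith
    calc _ ≤ 1 * (2 * (x + ε)) ^ (m + 1) * (2 * ε / (x + ε)) := by gcongr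
      _ = 2 ^ (m + 2) * (x + ε) ^ m * ε := by rw [mul_pow]; field_simp; ring

lemma outageIntegrand_ge (n : ℕ) (hε : 0 < ε) (hε16 : ε ≤ 1 / 16)
    (hx : x ∈ Icc (√ε / 4) (√ε / 2)) :
    exp (-1) * (exp (-1) * (√ε / 2)) ^ n * (exp (-1) * √ε) ≤ outageIntegrand n ε x := by
  obtain ⟨hx1, hx2⟩ := hx
  set s := √ε
  have hs2 : s ^ 2 = ε := sq_sqrt hε.le
  have hs0 : 0 < s := sqrt_pos.2 hε
  have hs14 : s ≤ 1 / 4 := by nlinarith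
  have hx0 : 0 < x := by linarith
  have ht : x + ε ≤ 3 * s / 4 := by nlinarith
  have hεx1 : 2 * s ≤ ε / x := by rw [le_div_iff₀ hx0]; nlinarith
  have hεx2 : ε / x ≤ 1 := by rw [div_le_iff₀ hx0]; nlinarith
  have hA : exp (-1) ≤ exp (-(x + ε)) := exp_le_exp.2 (by linarith)
  have hB : exp (-1) * (s / 2) ≤ 1 - exp (-2 * (x + ε)) := by
    have := exp_neg_mul_sub_le_exp_neg_sub_exp_neg 0 (2 * (x + ε))
    rw [neg_zero, exp_zero, sub_zero] at this
    rw [neg_mul]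
    calc exp (-1) * (s / 2) ≤ exp (-(2 * (x + ε))) * (2 * (x + ε)) := by
          gcongr <;> linarith
      _ ≤ _ := this
  have hC : exp (-1) * s ≤ exp (-(x + ε)) - exp (-(ε / x)) := by
    calc exp (-1) * s ≤ exp (-(ε / x)) * (ε / x - (x + ε)) := by gcongr; linarith
      _ ≤ _ := exp_neg_mul_sub_le_exp_neg_sub_exp_neg _ _
  unfold outageIntegrand
  have hB0 : 0 ≤ 1 - exp (-2 * (x + ε)) := (by positivity : (0:ℝ) ≤ exp (-1) * (s / 2)).trans hB
  gcongr

end outageIntegrand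

lemma intervalIntegrable_of_abs_le_of_pos {f : ℝ → ℝ} (hf : Measurable f) {b C : ℝ} (hb : 0 ≤ b)
    (h : ∀ x, 0 < x → |f x| ≤ C) : IntervalIntegrable f volume 0 b := by
  refine (intervalIntegrable_const (c := C)).mono_fun hf.aestronglyMeasurable ?_
  rw [uIoc_of_le hb]
  filter_upwards [ae_restrict_mem measurableSet_Ioc] with x hx
  exact (h x hx.1).trans (le_abs_self C)

section integral

variable {ε : ℝ}

lemma intervalIntegrable_outageIntegrand (n : ℕ) (hε : 0 ≤ ε) {b : ℝ} (hb : 0 ≤ b) :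
    IntervalIntegrable (outageIntegrand n ε) volume 0 b :=
  intervalIntegrable_of_abs_le_of_pos (by unfold outageIntegrand; fun_prop) hb
    fun _ hx => abs_outageIntegrand_le_one n hε hx

lemma integral_outageIntegrand_le {n : ℕ} (hn : 1 ≤ n) (hε : 0 < ε) (hε1 : ε ≤ 1) :
    ∫ x in (0 : ℝ)..epsZero ε - ε, outageIntegrand n ε x ≤ 4 ^ n * √ε ^ (n + 2) := by
  obtain ⟨m, rfl⟩ := Nat.exists_eq_add_of_le' hn
  set s := √ε
  have hs2 : s ^ 2 = ε := sq_sqrt hε.le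
  have hεs : ε ≤ s := by nlinarith [sqrt_le_one.2 hε1, sqrt_nonneg ε]
  have hd0 := (epsZero_sub_pos hε).le
  have hds : epsZero ε - ε ≤ s := epsZero_sub_le_sqrt hε
  have hmono := intervalIntegral.integral_mono_on_of_le_Ioo hd0
    (intervalIntegrable_outageIntegrand (m + 1) hε.le hd0)
    (intervalIntegrable_const (c := 4 ^ (m + 1) * s ^ (m + 2))) fun x hx => by
      calc outageIntegrand (m + 1) ε x ≤ 2 ^ (m + 2) * (x + ε) ^ m * ε :=
            outageIntegrand_le m hε hx.1
        _ ≤ 2 ^ (m + 2) * (2 * s) ^ m * s ^ 2 := by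
            rw [hs2]; gcongr <;> linarith [hx.1, hx.2]
        _ = 4 ^ (m + 1) * s ^ (m + 2) := by
            rw [show (4 : ℝ) = 2 ^ 2 by norm_num, ← pow_mul]; ring
  rw [intervalIntegral.integral_const, smul_eq_mul, sub_zero] at hmono
  calc _ ≤ (epsZero ε - ε) * (4 ^ (m + 1) * s ^ (m + 2)) := hmono
    _ ≤ s * (4 ^ (m + 1) * s ^ (m + 2)) := by gcongr
    _ = 4 ^ (m + 1) * s ^ (m + 1 + 2) := by ring

lemma le_integral_outageIntegrand (n : ℕ) (hε : 0 < ε) (hε16 : ε ≤ 1 / 16) :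
    exp (-1) ^ 2 / 4 * (exp (-1) / 2) ^ n * √ε ^ (n + 2)
      ≤ ∫ x in (0 : ℝ)..epsZero ε - ε, outageIntegrand n ε x := by
  set s := √ε
  have hs0 : 0 < s := sqrt_pos.2 hε
  have hd0 := (epsZero_sub_pos hε).le
  have hsd : s / 2 ≤ epsZero ε - ε := sqrt_div_two_le_epsZero_sub hε (by linarith)
  have hint := intervalIntegrable_outageIntegrand n hε.le hd0
  have hnonneg : 0 ≤ᵐ[volume.restrict (Ioc 0 (epsZero ε - ε))] outageIntegrand n ε := by
    filter_upwards [ae_restrict_mem measurableSet_Ioc] with x hx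
    refine outageIntegrand_nonneg n hε.le hx.1 ?_
    calc x * (x + ε) ≤ (epsZero ε - ε) * epsZero ε := by
          gcongr <;> linarith [hx.1, hx.2]
      _ = ε := epsZero_sub_mul_epsZero hε.le
  have hmid := intervalIntegral.integral_mono_on (by linarith : s / 4 ≤ s / 2)
    intervalIntegrable_const
    (hint.mono_set (by rw [uIcc_of_le hd0, uIcc_of_le (by linarith)]; gcongr; linarith))
    fun x hx => outageIntegrand_ge n hε hε16 hx
  rw [intervalIntegral.integral_const, smul_eq_mul] at hmid
  calc _ = (s / 2 - s / 4) * (exp (-1) * (exp (-1) * (s / 2)) ^ n * (exp (-1) * s)) := by ring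
    _ ≤ _ := hmid
    _ ≤ _ := intervalIntegral.integral_mono_interval (by positivity) (by linarith) hsd hnonneg hint

end integral

lemma sum_choose_mul_exp (n : ℕ) (t : ℝ) :
    ∑ i ∈ Finset.range (n + 1), (n.choose i : ℝ) * (-1) ^ i * exp (-(2 * (i : ℝ) + 1) * t)
      = exp (-t) * (1 - exp (-2 * t)) ^ n := by
  rw [one_sub_pow_eq_sum, Finset.mul_sum]
  refine Finset.sum_congr rfl fun i _ => ?_
  rw [← exp_nat_mul, show -(2 * (i : ℝ) + 1) * t = -t + i * (-2 * t) by ring, exp_add]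
  ring

section q4

variable {ε : ℝ}

lemma intervalIntegrable_exp_sub_exp_div (hε : 0 ≤ ε) {b : ℝ} (hb : 0 ≤ b) :
    IntervalIntegrable (fun x => exp (-(x + ε)) - exp (-(ε / x))) volume 0 b :=
  intervalIntegrable_of_abs_le_of_pos (C := 1) (by fun_prop) hb fun x hx => by
    have h1 := exp_le_one_iff.2 (by linarith : -(x + ε) ≤ 0)
    have h2 := exp_le_one_iff.2 (neg_nonpos.2 (div_nonneg hε hx.le))
    rw [abs_le]; constructor <;> nlinarith [exp_pos (-(x + ε)), exp_pos (-(ε / x))]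

lemma q4_term_eq_integral {a b : ℝ} (ha : 0 ≤ a) (hε : 0 ≤ ε) (hb : ε ≤ b) :
    (exp (-2 * (a + 1) * ε) - exp (-2 * (a + 1) * b)) / (2 * (a + 1))
        - exp (-(2 * a + 1) * ε) * ∫ x in (0 : ℝ)..b - ε, exp (-(2 * a + 1) * x - ε / x)
      = ∫ x in (0 : ℝ)..b - ε,
          exp (-(2 * a + 1) * (x + ε)) * (exp (-(x + ε)) - exp (-(ε / x))) := by
  have hc : -2 * (a + 1) ≠ 0 := by nlinarith
  have h1 : ∫ x in (0 : ℝ)..b - ε, exp (-2 * (a + 1) * (x + ε))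
      = (exp (-2 * (a + 1) * ε) - exp (-2 * (a + 1) * b)) / (2 * (a + 1)) := by
    rw [intervalIntegral.integral_comp_add_right (fun x => exp (-2 * (a + 1) * x)),
      intervalIntegral.integral_comp_mul_left (fun x => exp x) hc, integral_exp, smul_eq_mul,
      zero_add, sub_add_cancel]
    field_simp
    ring
  have h2 : ∫ x in (0 : ℝ)..b - ε, exp (-(2 * a + 1) * (x + ε) - ε / x)
      = exp (-(2 * a + 1) * ε) * ∫ x in (0 : ℝ)..b - ε, exp (-(2 * a + 1) * x - ε / x) := by
    rw [← intervalIntegral.integral_const_mul]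
    congr 1 with x
    rw [← exp_add]
    ring_nf
  have hi1 : IntervalIntegrable (fun x => exp (-2 * (a + 1) * (x + ε))) volume 0 (b - ε) :=
    (by fun_prop : Continuous fun x => exp (-2 * (a + 1) * (x + ε))).intervalIntegrable _ _
  have hi2 : IntervalIntegrable (fun x => exp (-(2 * a + 1) * (x + ε) - ε / x)) volume 0 (b - ε) :=
    intervalIntegrable_of_abs_le_of_pos (by fun_prop) (by linarith) fun x hx => by
      rw [abs_of_pos (exp_pos _)]
      exact exp_le_one_iff.2 (by nlinarith [div_nonneg hε hx.le])
  rw [← h1, ← h2, ← intervalIntegral.integral_sub hi1 hi2]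
  refine intervalIntegral.integral_congr fun x _ => ?_
  simp only [mul_sub, ← exp_add]
  ring_nf

lemma q4_eq_integral (n : ℕ) (hε : 0 < ε) :
    q4 (n + 1) ε = 2 * (n + 1 : ℕ) * ∫ x in (0 : ℝ)..epsZero ε - ε, outageIntegrand n ε x := by
  have hb : ε ≤ epsZero ε := by linarith [epsZero_sub_pos hε]
  have hint := intervalIntegrable_exp_sub_exp_div hε.le (epsZero_sub_pos hε).le
  unfold q4
  rw [Nat.add_sub_cancel]
  congr 1
  simp_rw [q4_term_eq_integral (Nat.cast_nonneg _) hε.le hb, ← intervalIntegral.integral_const_mul]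
  rw [← intervalIntegral.integral_finsetSum fun i _ =>
    ((hint.continuousOn_mul (by fun_prop)).const_mul _)]
  refine intervalIntegral.integral_congr fun x _ => ?_
  simp_rw [← mul_assoc, ← Finset.sum_mul, sum_choose_mul_exp, outageIntegrand]

end q4

lemma tendsto_log_div_log_of_le_rpow {f : ℝ → ℝ} {a c C : ℝ} (hc : 0 < c)
    (hf : ∀ᶠ ε in 𝓝[>] 0, c * ε ^ a ≤ f ε ∧ f ε ≤ C * ε ^ a) :
    Tendsto (fun ε => log (f ε) / log ε) (𝓝[>] 0) (𝓝 a) := by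
  have hlim (k : ℝ) : Tendsto (fun ε => a + log k / log ε) (𝓝[>] 0) (𝓝 a) := by
    simpa using tendsto_const_nhds.add (tendsto_const_nhds.div_atBot tendsto_log_nhdsGT_zero)
  have hbounds : ∀ᶠ ε in 𝓝[>] 0,
      a + log C / log ε ≤ log (f ε) / log ε ∧ log (f ε) / log ε ≤ a + log c / log ε := by
    filter_upwards [hf, Ioo_mem_nhdsGT one_pos] with ε ⟨hlo, hhi⟩ ⟨hε, hε1⟩
    have hlogε : log ε < 0 := log_neg hε hε1
    have hpow : 0 < ε ^ a := rpow_pos_of_pos hε a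
    have hC : 0 < C := pos_of_mul_pos_left ((mul_pos hc hpow).trans_le (hlo.trans hhi)) hpow.le
    have hexpand {k : ℝ} (hk : 0 < k) : log (k * ε ^ a) / log ε = a + log k / log ε := by
      rw [log_mul hk.ne' hpow.ne', log_rpow hε]
      field_simp [hlogε.ne]
      ring
    rw [← hexpand hC, ← hexpand hc]
    exact ⟨div_le_div_of_nonpos_of_le hlogε.le (log_le_log ((mul_pos hc hpow).trans_le hlo) hhi),
      div_le_div_of_nonpos_of_le hlogε.le (log_le_log (mul_pos hc hpow) hlo)⟩
  exact tendsto_of_tendsto_of_tendsto_of_le_of_le' (hlim C) (hlim c)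
    (hbounds.mono fun _ h => h.1) (hbounds.mono fun _ h => h.2)

/-- Fix `M ≥ 2`. With `ε₀(ε) = (ε + √(ε² + 4ε))/2` and
`Q₄(ε) = 2M Σ_{i=0}^{M−1} C(M−1,i) (−1)^i [ (e^{−2(i+1)ε} − e^{−2(i+1)ε₀})/(2(i+1))
  − e^{−(2i+1)ε} ∫₀^{ε₀−ε} e^{−(2i+1)x − ε/x} dx ]`,
we have `lim_{ε→0⁺} log Q₄(ε)/log ε = (M+1)/2`. -/
theorem stmt11 (M : ℕ) (hM : 2 ≤ M) :
    Tendsto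
      (fun ε : ℝ =>
        Real.log
            (2 * (M : ℝ) *
              ∑ i ∈ Finset.range M,
                ((M - 1).choose i : ℝ) * (-1) ^ i *
                  ((Real.exp (-2 * ((i : ℝ) + 1) * ε)
                      - Real.exp (-2 * ((i : ℝ) + 1) * ((ε + Real.sqrt (ε ^ 2 + 4 * ε)) / 2)))
                      / (2 * ((i : ℝ) + 1))
                    - Real.exp (-(2 * (i : ℝ) + 1) * ε) *
                        ∫ x in (0 : ℝ)..(ε + Real.sqrt (ε ^ 2 + 4 * ε)) / 2 - ε,
                          Real.exp (-(2 * (i : ℝ) + 1) * x - ε / x)))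
          / Real.log ε)
      (𝓝[>] 0) (𝓝 (((M : ℝ) + 1) / 2)) := by
  obtain ⟨n, rfl⟩ : ∃ n, M = n + 1 := ⟨M - 1, by omega⟩
  change Tendsto (fun ε => log (q4 (n + 1) ε) / log ε) _ _
  refine tendsto_log_div_log_of_le_rpow
    (c := 2 * (n + 1 : ℕ) * (exp (-1) ^ 2 / 4 * (exp (-1) / 2) ^ n))
    (C := 2 * (n + 1 : ℕ) * 4 ^ n) (by positivity) ?_
  filter_upwards [Ioo_mem_nhdsGT (by norm_num : (0 : ℝ) < 1 / 16)] with ε ⟨hε, hε16⟩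
  have hpow : ε ^ ((((n + 1 : ℕ) : ℝ) + 1) / 2) = √ε ^ (n + 2) := by
    rw [sqrt_eq_rpow, ← rpow_natCast, ← rpow_mul hε.le]
    push_cast
    ring_nf
  rw [hpow, q4_eq_integral n hε]
  have hM0 : (0 : ℝ) ≤ 2 * (n + 1 : ℕ) := by positivity
  have hlo := mul_le_mul_of_nonneg_left (le_integral_outageIntegrand n hε hε16.le) hM0
  have hhi := mul_le_mul_of_nonneg_left
    (integral_outageIntegrand_le (by omega : 1 ≤ n) hε (by linarith)) hM0
  constructor <;> linarith
end
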